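/- arXiv:2012.13517 — 5 statements merged into one kernel-verified Lean document; each statement's English description precedes it below -/
import Mathlib

section
/- Let s ≥ 1 and l ≥ 1 be integers and let y_1 < y_2 < ... < y_s be integers. For 0 ≤ m ≤ l set ν_m = Σ_{1 ≤ ξ_1 < ξ_2 < ... < ξ_m ≤ s+l-1} ξ_1·ξ_2···ξ_m (the m-th elementary symmetric function of 1, 2, ..., s+l-1), with ν_0 = 1. Then Σ_{r=0}^{l} (-1)^{l-r} ν_{l-r} · ( Σ_{α_1+...+α_s = r, α_i ≥ 0} y_1^{α_1} y_2^{α_2} ··· y_s^{α_s} ) = Σ_{1 ≤ i_1 ≤ i_2 ≤ ... ≤ i_l ≤ s} Π_{t=1}^{l} ( y_{i_t} - (i_t + t - 1) ). -/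
/-!
The left side is the coefficient of `X ^ l` in
`∏_{i<s} (1 - y_i X)⁻¹ · ∏_{k<s+l-1} (1 - (k+1) X)`.
As functions of `(s, l)`, this coefficient and the sum over weakly increasing tuples satisfy the
same recursion `F(n+1, l+1) = F(n, l+1) + (y_n - z_{n+l}) F(n+1, l)` (here `z_k = k + 1`) with the
same boundary values. For the tuples, split on whether the last index is the largest one; for the
coefficient, multiplying by `1 - y_n X` removes the variable `y_n` and multiplying by
`1 - z_{n+l} X` adds a factor to the second product.
-/

open Finset PowerSeries

theorem sum_finsuppAntidiag_eq_sum_piAntidiag {ι M : Type*} [DecidableEq ι] [AddCommMonoid M]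
    (s : Finset ι) (n : ℕ) (F : (ι → ℕ) → M) :
    ∑ f ∈ s.finsuppAntidiag n, F f = ∑ f ∈ s.piAntidiag n, F f := by
  rw [finsuppAntidiag, sum_map, ← sum_attach (s.piAntidiag n) F]
  rfl

section PowerSeries

variable {R : Type*} [CommRing R]

theorem coeff_prod_one_sub_C_mul_X {ι : Type*} (S : Finset ι) (z : ι → R) (m : ℕ) :
    coeff m (∏ k ∈ S, (1 - C (z k) * X)) =
      (-1) ^ m * ∑ A ∈ S.powersetCard m, ∏ k ∈ A, z k := by
  have h : ∀ A : Finset ι,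
      ∏ k ∈ A, C (-z k) * (X : R⟦X⟧) = C ((-1) ^ #A * ∏ k ∈ A, z k) * X ^ #A := by
    intro A
    rw [prod_mul_distrib, prod_const, ← map_prod, prod_neg]
  simp_rw [sub_eq_add_neg, ← neg_mul, ← map_neg, prod_one_add, h, map_sum, coeff_C_mul_X_pow,
    ← sum_filter, powersetCard_eq_filter, mul_sum]
  refine sum_congr (by ext; simp [eq_comm]) fun A hA => ?_
  rw [(mem_filter.1 hA).2]

theorem rescale_mk_one_mul_one_sub_C_mul_X (a : R) : rescale a (mk 1) * (1 - C a * X) = 1 := by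
  simpa [rescale_X] using congrArg (rescale a) (mk_one_mul_one_sub_eq_one R)

theorem coeff_prod_rescale_mk_one {n : ℕ} (y : Fin n → R) (r : ℕ) :
    coeff r (∏ i, rescale (y i) (mk 1)) =
      ∑ α ∈ Nat.antidiagonalTuple n r, ∏ i, y i ^ α i := by
  rw [coeff_prod, ← piAntidiag_univ_fin_eq_antidiagonalTuple]
  simp only [coeff_rescale, coeff_mk, Pi.one_apply, mul_one]
  exact sum_finsuppAntidiag_eq_sum_piAntidiag univ r fun α => ∏ i, y i ^ α i

theorem coeff_succ_mul_one_sub_C_mul_X (f : R⟦X⟧) (a : R) (k : ℕ) :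
    coeff (k + 1) (f * (1 - C a * X)) = coeff (k + 1) f - a * coeff k f := by
  rw [mul_sub, mul_one, mul_left_comm, ← mul_assoc, map_sub, coeff_succ_mul_X, coeff_C_mul]

end PowerSeries

section WeaklyIncreasing

variable {M : Type*} [AddCommMonoid M]

def weaklyIncreasing (l n : ℕ) : Finset (Fin l → Fin n) :=
  univ.filter fun i => ∀ a b : Fin l, a ≤ b → i a ≤ i b

@[simp]
theorem mem_weaklyIncreasing {l n : ℕ} {i : Fin l → Fin n} :
    i ∈ weaklyIncreasing l n ↔ Monotone i := by
  simp [weaklyIncreasing, Monotone]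

theorem sum_weaklyIncreasing_filter_last_ne (l n : ℕ)
    (F : (Fin (l + 1) → Fin (n + 1)) → M) :
    ∑ i ∈ (weaklyIncreasing (l + 1) (n + 1)).filter (fun i => i (Fin.last l) ≠ Fin.last n),
        F i
      = ∑ j ∈ weaklyIncreasing (l + 1) n, F (Fin.castSucc ∘ j) := by
  have hlt : ∀ i ∈ (weaklyIncreasing (l + 1) (n + 1)).filter
      (fun i => i (Fin.last l) ≠ Fin.last n), ∀ t, i t ≠ Fin.last n := by
    intro i hi t
    simp only [mem_filter, mem_weaklyIncreasing] at hi
    exact (lt_of_le_of_lt (hi.1 (Fin.le_last t)) (Fin.lt_last_iff_ne_last.2 hi.2)).ne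
  refine sum_bij' (fun i hi t => (i t).castPred (hlt i hi t)) (fun j _ => Fin.castSucc ∘ j)
    ?_ ?_ (fun _ _ => rfl) (fun _ _ => rfl) (fun _ _ => rfl)
  · intro i hi
    rw [mem_weaklyIncreasing]
    intro a b hab
    exact Fin.castPred_le_castPred_iff.2 (mem_weaklyIncreasing.1 (mem_filter.1 hi).1 hab)
  · intro j hj
    simp only [mem_filter, mem_weaklyIncreasing] at hj ⊢
    exact ⟨Fin.strictMono_castSucc.monotone.comp hj, (Fin.castSucc_lt_last _).ne⟩

theorem Monotone.snoc_last {l n : ℕ} {j : Fin l → Fin (n + 1)} (hj : Monotone j) :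
    Monotone (Fin.snoc j (Fin.last n) : Fin (l + 1) → Fin (n + 1)) := by
  intro a b hab
  induction b using Fin.lastCases with
  | last => simp [Fin.le_last]
  | cast b =>
    induction a using Fin.lastCases with
    | last => exact absurd hab (Fin.castSucc_lt_last b).not_ge
    | cast a => simpa using hj (Fin.castSucc_le_castSucc_iff.1 hab)

theorem sum_weaklyIncreasing_filter_last_eq (l n : ℕ)
    (F : (Fin (l + 1) → Fin (n + 1)) → M) :
    ∑ i ∈ (weaklyIncreasing (l + 1) (n + 1)).filter (fun i => i (Fin.last l) = Fin.last n), F i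
      = ∑ j ∈ weaklyIncreasing l (n + 1), F (Fin.snoc j (Fin.last n)) := by
  refine sum_nbij' Fin.init (fun j => Fin.snoc j (Fin.last n)) ?_ ?_ ?_ ?_ ?_
  · intro i hi
    simp only [mem_filter, mem_weaklyIncreasing] at hi ⊢
    exact hi.1.comp Fin.strictMono_castSucc.monotone
  · intro j hj
    simp only [mem_filter, mem_weaklyIncreasing] at hj ⊢
    exact ⟨hj.snoc_last, Fin.snoc_last _ _⟩
  · intro i hi
    simp only [mem_filter] at hi
    rw [← hi.2, Fin.snoc_init_self]
  · intro j _
    exact Fin.init_snoc _ _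
  · intro i hi
    simp only [mem_filter] at hi
    rw [← hi.2, Fin.snoc_init_self]

end WeaklyIncreasing

section FactorialHsymm

variable {R : Type*} [CommRing R]

/-- The factorial complete homogeneous symmetric function `h_l(y_0, …, y_{n-1} | z)`. -/
def factorialHsymm (y z : ℕ → R) (n l : ℕ) : R :=
  ∑ i ∈ weaklyIncreasing l n, ∏ t, (y (i t) - z (i t + t))

variable (y z : ℕ → R)

theorem factorialHsymm_zero_right (n : ℕ) : factorialHsymm y z n 0 = 1 := by
  simp [factorialHsymm, weaklyIncreasing]

theorem factorialHsymm_zero_succ (l : ℕ) : factorialHsymm y z 0 (l + 1) = 0 := by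
  simp [factorialHsymm, weaklyIncreasing]

theorem factorialHsymm_succ_succ (n l : ℕ) :
    factorialHsymm y z (n + 1) (l + 1) =
      factorialHsymm y z n (l + 1) + (y n - z (n + l)) * factorialHsymm y z (n + 1) l := by
  rw [factorialHsymm, ← sum_filter_not_add_sum_filter _ (fun i => i (Fin.last l) = Fin.last n),
    sum_weaklyIncreasing_filter_last_ne, sum_weaklyIncreasing_filter_last_eq, factorialHsymm,
    factorialHsymm, mul_sum]
  congr 1
  refine sum_congr rfl fun j _ => ?_
  rw [Fin.prod_univ_castSucc]
  simp [mul_comm]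

theorem coeff_prod_mul_prod_eq_factorialHsymm (n l : ℕ) :
    coeff l ((∏ i ∈ range n, rescale (y i) (mk 1)) *
        ∏ k ∈ range (n + l - 1), (1 - C (z k) * X)) = factorialHsymm y z n l := by
  induction l generalizing n with
  | zero =>
    have h : ∀ a : R, constantCoeff (rescale a (mk 1)) = 1 := fun a => by
      rw [← coeff_zero_eq_constantCoeff_apply, coeff_rescale]; simp
    simp [factorialHsymm_zero_right, h]
  | succ l ihl =>
    induction n with
    | zero =>
      rw [factorialHsymm_zero_succ, range_zero, prod_empty, one_mul, zero_add,
        Nat.add_sub_cancel, coeff_prod_one_sub_C_mul_X, powersetCard_eq_empty.2 (by simp),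
        sum_empty, mul_zero]
    | succ n ihn =>
      set F := (∏ i ∈ range (n + 1), rescale (y i) (mk 1)) *
        ∏ k ∈ range (n + l), (1 - C (z k) * X) with hFdef
      have hF : (∏ i ∈ range n, rescale (y i) (mk 1)) *
          ∏ k ∈ range (n + l), (1 - C (z k) * X) = F * (1 - C (y n) * X) := by
        rw [hFdef, prod_range_succ, mul_right_comm, mul_assoc (∏ i ∈ range n, _),
          rescale_mk_one_mul_one_sub_C_mul_X, mul_one]
      have ihn' : coeff (l + 1) F - y n * coeff l F = factorialHsymm y z n (l + 1) := by
        rw [← coeff_succ_mul_one_sub_C_mul_X, ← hF]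
        exact ihn
      have ihl' : coeff l F = factorialHsymm y z (n + 1) l := by
        rw [← ihl, Nat.add_right_comm, Nat.add_sub_cancel]
      calc _ = coeff (l + 1) (F * (1 - C (z (n + l)) * X)) := by
            rw [show n + 1 + (l + 1) - 1 = n + l + 1 by omega,
              prod_range_succ (fun k => 1 - C (z k) * X) (n + l), ← mul_assoc]
        _ = coeff (l + 1) F - z (n + l) * coeff l F := coeff_succ_mul_one_sub_C_mul_X _ _ _
        _ = _ := by rw [factorialHsymm_succ_succ, ← ihn', ← ihl']; ring

theorem sum_esymm_mul_hsymm_eq_factorialHsymm (n l : ℕ) :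
    ∑ r ∈ range (l + 1), (-1) ^ (l - r) *
        (∑ A ∈ (range (n + l - 1)).powersetCard (l - r), ∏ k ∈ A, z k) *
        (∑ α ∈ Nat.antidiagonalTuple n r, ∏ i : Fin n, y i ^ α i) =
      factorialHsymm y z n l := by
  rw [← coeff_prod_mul_prod_eq_factorialHsymm, coeff_mul,
    Nat.sum_antidiagonal_eq_sum_range_succ_mk]
  refine sum_congr rfl fun r _ => ?_
  rw [prod_range (fun i => rescale (y i) (mk 1)), coeff_prod_rescale_mk_one,
    coeff_prod_one_sub_C_mul_X]
  ring

end FactorialHsymm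

theorem sum_powersetCard_Icc_one_prod {S : Type*} [CommSemiring S] (N m : ℕ) (f : ℕ → S) :
    ∑ A ∈ (Icc 1 N).powersetCard m, ∏ x ∈ A, f x =
      ∑ A ∈ (range N).powersetCard m, ∏ k ∈ A, f (k + 1) := by
  rw [range_eq_Ico, ← Ico_add_one_right_eq_Icc, ← zero_add 1, ← map_add_right_Ico,
    powersetCard_map, sum_map]
  simp

/-- Indices are 0-based: the paper's `i_t + t - 1` is `i t + t + 1` here. -/
theorem stmt0_general (s l : ℕ) (y : Fin s → ℤ) :
    ∑ r ∈ Finset.range (l + 1),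
      (-1 : ℤ) ^ (l - r) *
        (∑ A ∈ (Finset.Icc 1 (s + l - 1)).powersetCard (l - r), ∏ x ∈ A, (x : ℤ)) *
        (∑ α ∈ Finset.Nat.antidiagonalTuple s r, ∏ i : Fin s, y i ^ α i) =
    ∑ i ∈ Finset.univ.filter (fun i : Fin l → Fin s => ∀ a b : Fin l, a ≤ b → i a ≤ i b),
      ∏ t : Fin l, (y (i t) - (((i t : ℕ) : ℤ) + ((t : ℕ) : ℤ) + 1)) := by
  set Y : ℕ → ℤ := fun k => if h : k < s then y ⟨k, h⟩ else 0
  have hY : ∀ i : Fin s, Y i = y i := fun i => dif_pos i.2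
  calc _ = ∑ r ∈ range (l + 1), (-1) ^ (l - r) *
          (∑ A ∈ (range (s + l - 1)).powersetCard (l - r), ∏ k ∈ A, ((k : ℤ) + 1)) *
          (∑ α ∈ Nat.antidiagonalTuple s r, ∏ i : Fin s, Y i ^ α i) := by
        simp only [sum_powersetCard_Icc_one_prod, hY, Nat.cast_succ]
    _ = factorialHsymm Y (fun k => (k : ℤ) + 1) s l :=
        sum_esymm_mul_hsymm_eq_factorialHsymm _ _ s l
    _ = _ := sum_congr rfl fun i _ => prod_congr rfl fun t _ => by rw [hY]; push_cast; ring

/-- Let `s ≥ 1`, `l ≥ 1` and `y 0 < y 1 < ⋯ < y (s-1)` integers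
(here `y : Fin s → ℤ` is 0-indexed, corresponding to `y_1 < ⋯ < y_s`).
With `ν_m` the `m`-th elementary symmetric function of `1, …, s+l-1`, one has
`Σ_{r=0}^l (-1)^{l-r} ν_{l-r} h_r(y) = Σ_{1 ≤ i_1 ≤ ⋯ ≤ i_l ≤ s} Π_t (y_{i_t} - (i_t + t - 1))`,
where `h_r` is the complete homogeneous symmetric function of degree `r`.
On the right, the 1-indexed quantity `i_t + t - 1` becomes `(i t) + t + 1` after
0-indexing both `i_t` and `t`. -/
theorem stmt0 (s l : ℕ) (hs : 1 ≤ s) (hl : 1 ≤ l) (y : Fin s → ℤ) (hy : StrictMono y) :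
    ∑ r ∈ Finset.range (l + 1),
      (-1 : ℤ) ^ (l - r) *
        (∑ A ∈ (Finset.Icc 1 (s + l - 1)).powersetCard (l - r), ∏ x ∈ A, (x : ℤ)) *
        (∑ α ∈ Finset.Nat.antidiagonalTuple s r, ∏ i : Fin s, y i ^ α i) =
    ∑ i ∈ Finset.univ.filter (fun i : Fin l → Fin s => ∀ a b : Fin l, a ≤ b → i a ≤ i b),
      ∏ t : Fin l, (y (i t) - (((i t : ℕ) : ℤ) + ((t : ℕ) : ℤ) + 1)) :=
  stmt0_general s l y
end

section
/- Let d = (0 = d_0 < d_1 < ... < d_s) and d' = (0 = d'_0 < d'_1 < ... < d'_s) be degree sequences such that d < d' ≤ (d')^{∨, d_s} < d^{∨, d_s} (pointwise). Then Ψ_d · f_1(d̃) ≥ Ψ_{d'} · f_1(d̃'). -/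
/-!
Pair the index `i` with `s - i` and put `N = d_s = d'_s`. For `2 i < s` the pair
`(d̃_i, d̃_{s-i})` is `(N - x, x)` with `x = max{d_{s-i}, ⌈N/2⌉}`: its sum is `N` whatever `d` is,
and its product `(N - x) x` decreases as `x ≥ ⌈N/2⌉` grows, i.e. as `d_{s-i}` grows. For
`2 i = s`, `d ≤ d' ≤ d'^∨` forces `d̃_i = d̃'_i = ⌊N/2⌋`. Hence `f₁(d̃') = f₁(d̃)` and, comparing
the squares of the products pair by pair, `Ψ_{d'} ≤ Ψ_d`. Finally `f₁(d̃) ≥ 0` since `d̃_i ≥ i`.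
-/

def f1 (s : ℕ) (e : ℕ → ℤ) : ℤ := ∑ i ∈ Finset.Icc 1 s, (e i - (i : ℤ))

/-- Here `s / 2 = k`, and `d s / 2`, `(d s + 1) / 2` are `⌊d_s/2⌋`, `⌈d_s/2⌉` (for `d_s ≥ 0`). -/
def tilde (s : ℕ) (d : ℕ → ℤ) : ℕ → ℤ := fun i =>
  if i ≤ s / 2 then min (d s - d (s - i)) (d s / 2) else max (d i) ((d s + 1) / 2)

def Psi (s : ℕ) (d : ℕ → ℤ) : ℤ := ∏ i ∈ Finset.Icc 1 s, tilde s d i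

open Finset

namespace Finset

theorem forall_mem_Ico_reflect {s : ℕ} {p : ℕ → ℕ → Prop} (hp : ∀ i j, p i j → p j i)
    (h : ∀ i, 1 ≤ i → 2 * i ≤ s → p i (s - i)) : ∀ i ∈ Ico 1 s, p i (s - i) := by
  intro i hi
  rw [mem_Ico] at hi
  rcases le_or_gt (2 * i) s with hle | hgt
  · exact h i hi.1 hle
  · simpa [Nat.sub_sub_self hi.2.le] using hp _ _ (h (s - i) (by omega) (by omega))

theorem prod_Ico_mul_reflect {M : Type*} [CommMonoid M] (f : ℕ → M) (s : ℕ) :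
    ∏ i ∈ Ico 1 s, f i * f (s - i) = (∏ i ∈ Ico 1 s, f i) ^ 2 := by
  rw [prod_mul_distrib, prod_Ico_reflect f 1 s.le_succ, Nat.add_sub_cancel_left,
    Nat.add_sub_cancel, sq]

theorem sum_Ico_add_reflect {M : Type*} [AddCommMonoid M] (f : ℕ → M) (s : ℕ) :
    ∑ i ∈ Ico 1 s, (f i + f (s - i)) = 2 • ∑ i ∈ Ico 1 s, f i := by
  rw [sum_add_distrib, sum_Ico_reflect f 1 s.le_succ, Nat.add_sub_cancel_left,
    Nat.add_sub_cancel, two_nsmul]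

theorem sum_Ico_eq_of_add_reflect_eq {M : Type*} [AddCommMonoid M] [IsAddTorsionFree M] {s : ℕ}
    {f g : ℕ → M} (h : ∀ i, 1 ≤ i → 2 * i ≤ s → f i + f (s - i) = g i + g (s - i)) :
    ∑ i ∈ Ico 1 s, f i = ∑ i ∈ Ico 1 s, g i := by
  have hpairs := forall_mem_Ico_reflect (p := fun i j => f i + f j = g i + g j)
    (fun i j hij => by rwa [add_comm, add_comm (g j)]) h
  have hdouble := sum_congr rfl hpairs
  rwa [sum_Ico_add_reflect, sum_Ico_add_reflect, nsmul_right_inj two_ne_zero] at hdouble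

theorem prod_Ico_le_of_mul_reflect_le {R : Type*} [CommSemiring R] [LinearOrder R]
    [IsStrictOrderedRing R] {s : ℕ} {f g : ℕ → R} (hf : ∀ i ∈ Ico 1 s, 0 ≤ f i)
    (hg : ∀ i ∈ Ico 1 s, 0 ≤ g i)
    (h : ∀ i, 1 ≤ i → 2 * i ≤ s → f i * f (s - i) ≤ g i * g (s - i)) :
    ∏ i ∈ Ico 1 s, f i ≤ ∏ i ∈ Ico 1 s, g i := by
  have hpairs := forall_mem_Ico_reflect (p := fun i j => f i * f j ≤ g i * g j)
    (fun i j hij => by rwa [mul_comm, mul_comm (g j)]) h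
  have hf_pairs : ∀ i ∈ Ico 1 s, 0 ≤ f i * f (s - i) := fun i hi =>
    mul_nonneg (hf i hi) (hf _ (by rw [mem_Ico] at hi ⊢; omega))
  have hsq := prod_le_prod hf_pairs hpairs
  rwa [prod_Ico_mul_reflect, prod_Ico_mul_reflect,
    pow_le_pow_iff_left₀ (prod_nonneg hf) (prod_nonneg hg) two_ne_zero] at hsq

end Finset

theorem sub_mul_le_sub_mul_of_le_add {R : Type*} [CommRing R] [LinearOrder R]
    [IsStrictOrderedRing R] {N x y : R} (hxy : x ≤ y) (hN : N ≤ x + y) :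
    (N - y) * y ≤ (N - x) * x := by
  nlinarith [mul_nonneg (sub_nonneg.2 hxy) (sub_nonneg.2 hN)]

section Tilde

variable {s i : ℕ} {d d' : ℕ → ℤ}

theorem add_sub_le_of_lt_succ (hd : ∀ i < s, d i < d (i + 1)) {j : ℕ} (hij : i ≤ j)
    (hjs : j ≤ s) : d i + (j - i : ℤ) ≤ d j := by
  induction j, hij using Nat.le_induction with
  | base => simp
  | succ j hij ih =>
    have := hd j (by omega)
    push_cast
    linarith [ih (by omega)]

theorem natCast_le_apply (hd : ∀ i < s, d i < d (i + 1)) (hd0 : d 0 = 0) (hi : i ≤ s) :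
    (i : ℤ) ≤ d i := by
  simpa [hd0] using add_sub_le_of_lt_succ hd i.zero_le hi

theorem natCast_le_tilde (hd : ∀ i < s, d i < d (i + 1)) (hd0 : d 0 = 0) (hi : i ≤ s) :
    (i : ℤ) ≤ tilde s d i := by
  have hs := natCast_le_apply hd hd0 (le_refl s)
  have hi' := natCast_le_apply hd hd0 hi
  have hgap := add_sub_le_of_lt_succ hd (Nat.sub_le s i) le_rfl
  push_cast [Nat.cast_sub hi] at hgap
  unfold tilde
  split_ifs <;> omega

theorem f1_tilde_nonneg (hd : ∀ i < s, d i < d (i + 1)) (hd0 : d 0 = 0) :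
    0 ≤ f1 s (tilde s d) :=
  sum_nonneg fun _ hi => sub_nonneg.2 (natCast_le_tilde hd hd0 (mem_Icc.1 hi).2)

theorem tilde_nonneg (h0 : ∀ j ≤ s, 0 ≤ d j) (hle : ∀ j ≤ s, d j ≤ d s) (hi : i ≤ s) :
    0 ≤ tilde s d i := by
  have := h0 s le_rfl
  unfold tilde
  split_ifs
  · have := hle (s - i) (Nat.sub_le s i)
    omega
  · have := h0 i hi
    omega

theorem tilde_add_tilde_sub (h : 2 * i < s) : tilde s d i + tilde s d (s - i) = d s := by
  simp only [tilde, if_pos (by omega : i ≤ s / 2), if_neg (by omega : ¬s - i ≤ s / 2)]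
  omega

theorem tilde_sub_of_two_mul_lt (h : 2 * i < s) :
    tilde s d (s - i) = max (d (s - i)) ((d s + 1) / 2) :=
  if_neg (by omega)

theorem tilde_of_two_mul_eq (h : 2 * i = s) (hi : 2 * d i ≤ d s) : tilde s d i = d s / 2 := by
  rw [tilde, if_pos (by omega), Nat.sub_eq_of_eq_add (by omega : s = i + i)]
  omega

theorem tilde_self_eq_of_eq (hs : 1 ≤ s) (hds : d' s = d s) : tilde s d' s = tilde s d s := by
  simp only [tilde, if_neg (by omega : ¬s ≤ s / 2), hds]

variable (hds : d' s = d s) (hle : ∀ j ≤ s, d j ≤ d' j)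
  (hdual : ∀ j ≤ s, d' j ≤ d s - d' (s - j))
include hds hle hdual

theorem tilde_eq_of_two_mul_eq (h : 2 * i = s) : tilde s d' i = tilde s d i := by
  have hi := hdual i (by omega)
  rw [Nat.sub_eq_of_eq_add (by omega : s = i + i)] at hi
  have := hle i (by omega)
  rw [tilde_of_two_mul_eq h (by omega), tilde_of_two_mul_eq h (by omega), hds]

theorem tilde_add_tilde_sub_eq (h : 2 * i ≤ s) :
    tilde s d' i + tilde s d' (s - i) = tilde s d i + tilde s d (s - i) := by
  rcases h.lt_or_eq with hlt | heq
  · rw [tilde_add_tilde_sub hlt, tilde_add_tilde_sub hlt, hds]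
  · rw [Nat.sub_eq_of_eq_add (by omega : s = i + i), tilde_eq_of_two_mul_eq hds hle hdual heq]

theorem tilde_mul_tilde_sub_le (h : 2 * i ≤ s) :
    tilde s d' i * tilde s d' (s - i) ≤ tilde s d i * tilde s d (s - i) := by
  rcases h.lt_or_eq with hlt | heq
  · rw [eq_sub_of_add_eq (tilde_add_tilde_sub hlt), eq_sub_of_add_eq (tilde_add_tilde_sub hlt),
      hds]
    refine sub_mul_le_sub_mul_of_le_add ?_ ?_ <;>
      rw [tilde_sub_of_two_mul_lt hlt, tilde_sub_of_two_mul_lt hlt, hds]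
    · exact max_le_max (hle _ (Nat.sub_le s i)) le_rfl
    · omega
  · rw [Nat.sub_eq_of_eq_add (by omega : s = i + i), tilde_eq_of_two_mul_eq hds hle hdual heq]

theorem f1_tilde_eq (hs : 1 ≤ s) : f1 s (tilde s d') = f1 s (tilde s d) := by
  unfold f1
  rw [sum_sub_distrib, sum_sub_distrib]
  congr 1
  rw [← add_sum_Ico_eq_sum_Icc hs, ← add_sum_Ico_eq_sum_Icc hs, tilde_self_eq_of_eq hs hds,
    sum_Ico_eq_of_add_reflect_eq (f := tilde s d') (g := tilde s d)
      fun _ _ h => tilde_add_tilde_sub_eq hds hle hdual h]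

theorem Psi_le_Psi (hs : 1 ≤ s) (hd : ∀ i < s, d i < d (i + 1)) (hd0 : d 0 = 0) :
    Psi s d' ≤ Psi s d := by
  have hd'_nonneg (j : ℕ) (hj : j ≤ s) : 0 ≤ d' j :=
    (Nat.cast_nonneg j).trans ((natCast_le_apply hd hd0 hj).trans (hle j hj))
  have hd'_le (j : ℕ) (hj : j ≤ s) : d' j ≤ d' s := by
    linarith [hdual j hj, hd'_nonneg (s - j) (Nat.sub_le s j)]
  have htilde_nonneg (i : ℕ) (hi : i ≤ s) : 0 ≤ tilde s d i :=
    (Nat.cast_nonneg i).trans (natCast_le_tilde hd hd0 hi)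
  unfold Psi
  rw [← mul_prod_Ico_eq_prod_Icc hs, ← mul_prod_Ico_eq_prod_Icc hs, tilde_self_eq_of_eq hs hds]
  refine mul_le_mul_of_nonneg_left ?_ (htilde_nonneg s le_rfl)
  exact prod_Ico_le_of_mul_reflect_le
    (fun i hi => tilde_nonneg hd'_nonneg hd'_le (mem_Ico.1 hi).2.le)
    (fun i hi => htilde_nonneg i (mem_Ico.1 hi).2.le)
    fun _ _ h => tilde_mul_tilde_sub_le hds hle hdual h

end Tilde

theorem stmt1_general (s : ℕ) (hs : 1 ≤ s) (d d' : ℕ → ℤ)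
    (hd : ∀ i < s, d i < d (i + 1)) (hd0 : d 0 = 0)
    (hle : ∀ i ≤ s, d i ≤ d' i)
    (hdual : ∀ i ≤ s, d' i ≤ d s - d' (s - i)) :
    Psi s d' * f1 s (tilde s d') ≤ Psi s d * f1 s (tilde s d) := by
  have hds : d' s = d s := by
    have := hdual s le_rfl
    rw [Nat.sub_self] at this
    linarith [hle 0 s.zero_le, hle s le_rfl]
  rw [f1_tilde_eq hds hle hdual hs]
  exact mul_le_mul_of_nonneg_right (Psi_le_Psi hds hle hdual hs hd hd0) (f1_tilde_nonneg hd hd0)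

/-- comparison lemma. Let `d, d'` be degree sequences
with `d_0 = d'_0 = 0` satisfying `d < d' ≤ (d')^{∨,d_s} < d^{∨,d_s}`
(pointwise on `0, …, s`; the strictness of both outer inequalities is the
single condition `d ≠ d'`, and `(d')^{∨,d_s} ≤ d^{∨,d_s}` follows from `d ≤ d'`).
Then `Ψ_{d'}·f₁(d̃') ≤ Ψ_d·f₁(d̃)`. -/
theorem stmt1 (s : ℕ) (hs : 1 ≤ s) (d d' : ℕ → ℤ)
    (hd : ∀ i < s, d i < d (i + 1)) (hd0 : d 0 = 0)
    (hd' : ∀ i < s, d' i < d' (i + 1)) (hd'0 : d' 0 = 0)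
    (hle : ∀ i ≤ s, d i ≤ d' i) (hne : ∃ i ≤ s, d i ≠ d' i)
    (hdual : ∀ i ≤ s, d' i ≤ d s - d' (s - i)) :
    Psi s d' * f1 s (tilde s d') ≤ Psi s d * f1 s (tilde s d) :=
  stmt1_general s hs d d' hd hd0 hle hdual
end

section
/- Let d = (0 = d_0 < d_1 < ... < d_s) be a degree sequence with d_0 = 0 and let r ≥ 0 be an integer. Then, in ℚ, Σ_{i=0}^{s} (-1)^i · d_i^{s+r} / ( Π_{l ≠ i} | d_l − d_i | ) = (-1)^s · Σ_{α_1 + ... + α_s = r, α_i ≥ 0} d_1^{α_1} d_2^{α_2} ··· d_s^{α_s}. -/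
/-!
Up to the sign `(-1)^s` produced by the absolute values, the left-hand side is the divided
difference of `X^(s+r)` at the nodes `d_0, …, d_s`. Since `(v_k - v_i)` cancels a factor of the
`k`-th denominator, divided differences satisfy `(f·X)[S] = v_i · f[S] + f[S ∖ i]`, which is the
recursion `h_{r+1}(x_0, …, x_n) = x_0 h_r(x_0, …, x_n) + h_{r+1}(x_1, …, x_n)` of the complete
homogeneous polynomials; both start from `X^n[S] = 1` for `|S| = n + 1` (a leading coefficient
of Lagrange interpolation). Finally `d_0 = 0` removes the first variable of `h_r`.
-/

open Finset

theorem Finset.Nat.sum_antidiagonalTuple_succ {M : Type*} [AddCommMonoid M] (k n : ℕ)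
    (f : (Fin (k + 1) → ℕ) → M) :
    ∑ α ∈ Nat.antidiagonalTuple (k + 1) n, f α =
      ∑ p ∈ antidiagonal n, ∑ β ∈ Nat.antidiagonalTuple k p.2, f (Fin.cons p.1 β) := by
  simp only [Finset.sum, Nat.antidiagonalTuple, Multiset.Nat.antidiagonalTuple,
    List.Nat.antidiagonalTuple, HasAntidiagonal.antidiagonal, Multiset.Nat.antidiagonal,
    Multiset.map_coe, Multiset.sum_coe, List.flatMap_def, List.map_flatten, List.sum_flatten,
    List.map_map, Function.comp_def]

section CompleteHomogeneous

variable {R : Type*} [CommSemiring R]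

def completeHomogeneous (n r : ℕ) (x : ℕ → R) : R :=
  ∑ α ∈ Nat.antidiagonalTuple n r, ∏ i : Fin n, x i ^ α i

theorem completeHomogeneous_zero_right (n : ℕ) (x : ℕ → R) : completeHomogeneous n 0 x = 1 := by
  simp [completeHomogeneous, Nat.antidiagonalTuple_zero_right]

theorem completeHomogeneous_one (r : ℕ) (x : ℕ → R) : completeHomogeneous 1 r x = x 0 ^ r := by
  simp [completeHomogeneous]

theorem completeHomogeneous_succ (n r : ℕ) (x : ℕ → R) :
    completeHomogeneous (n + 1) r x =
      ∑ p ∈ antidiagonal r, x 0 ^ p.1 * completeHomogeneous n p.2 (fun i => x (i + 1)) := by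
  simp only [completeHomogeneous, Nat.sum_antidiagonalTuple_succ, Fin.prod_univ_succ, mul_sum,
    Fin.cons_zero, Fin.cons_succ, Fin.val_zero, Fin.val_succ]

theorem completeHomogeneous_succ_succ (n r : ℕ) (x : ℕ → R) :
    completeHomogeneous (n + 1) (r + 1) x =
      x 0 * completeHomogeneous (n + 1) r x +
        completeHomogeneous n (r + 1) (fun i => x (i + 1)) := by
  rw [completeHomogeneous_succ, Nat.sum_antidiagonal_succ, completeHomogeneous_succ, mul_sum,
    pow_zero, one_mul, add_comm]
  simp only [pow_succ', mul_assoc]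

theorem completeHomogeneous_succ_of_eq_zero (n r : ℕ) {x : ℕ → R} (hx : x 0 = 0) :
    completeHomogeneous (n + 1) r x = completeHomogeneous n r (fun i => x (i + 1)) := by
  cases r with
  | zero => simp only [completeHomogeneous_zero_right]
  | succ r => rw [completeHomogeneous_succ_succ, hx, zero_mul, zero_add]

end CompleteHomogeneous

section DividedDifference

variable {ι κ F : Type*} [Field F] [DecidableEq ι]

def dividedDifference (s : Finset ι) (v f : ι → F) : F :=
  ∑ i ∈ s, f i / ∏ j ∈ s.erase i, (v i - v j)

theorem dividedDifference_map [DecidableEq κ] (s : Finset ι) (e : ι ↪ κ) (v f : κ → F) :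
    dividedDifference (s.map e) v f = dividedDifference s (v ∘ e) (f ∘ e) := by
  simp only [dividedDifference, sum_map, ← map_erase, prod_map, Function.comp_apply]

theorem dividedDifference_mul_eq_add_erase {s : Finset ι} {v : ι → F} (hv : Set.InjOn v s)
    {i : ι} (hi : i ∈ s) (f : ι → F) :
    dividedDifference s v (fun k => f k * v k) =
      v i * dividedDifference s v f + dividedDifference (s.erase i) v f := by
  have erase_node : ∀ k ∈ s.erase i, (v k - v i) * (f k / ∏ j ∈ s.erase k, (v k - v j)) =
      f k / ∏ j ∈ (s.erase i).erase k, (v k - v j) := by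
    intro k hk
    have hki : v k - v i ≠ 0 :=
      sub_ne_zero.2 fun h => ne_of_mem_erase hk (hv (mem_of_mem_erase hk) hi h)
    have hik : i ∈ s.erase k := mem_erase.2 ⟨fun h => ne_of_mem_erase hk h.symm, hi⟩
    rw [erase_right_comm, ← mul_prod_erase _ (fun j => v k - v j) hik]
    field_simp
  calc dividedDifference s v (fun k => f k * v k)
      = ∑ k ∈ s, ((v k - v i) * (f k / ∏ j ∈ s.erase k, (v k - v j)) +
          v i * (f k / ∏ j ∈ s.erase k, (v k - v j))) :=
        sum_congr rfl fun k _ => by ring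
    _ = dividedDifference (s.erase i) v f + v i * dividedDifference s v f := by
        rw [sum_add_distrib, ← mul_sum, ← sum_erase _ (by rw [sub_self, zero_mul]),
          sum_congr rfl erase_node, dividedDifference, dividedDifference]
    _ = _ := add_comm _ _

theorem dividedDifference_pow_eq_one {s : Finset ι} {v : ι → F} (hv : Set.InjOn v s) {n : ℕ}
    (hs : #s = n + 1) : dividedDifference s v (fun k => v k ^ n) = 1 := by
  have hlead := Lagrange.leadingCoeff_eq_sum hv (P := Polynomial.X ^ n) (by simp [hs])
  simpa [dividedDifference] using hlead.symm

theorem dividedDifference_range_pow (n : ℕ) (x : ℕ → F) (hx : Set.InjOn x (range (n + 1)))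
    (r : ℕ) : dividedDifference (range (n + 1)) x (fun k => x k ^ (n + r)) =
      completeHomogeneous (n + 1) r x := by
  induction n generalizing x r with
  | zero => simp [dividedDifference, completeHomogeneous_one]
  | succ n ih =>
    induction r with
    | zero =>
      rw [add_zero, completeHomogeneous_zero_right]
      exact dividedDifference_pow_eq_one hx (card_range _)
    | succ r ihr =>
      have hx' : Set.InjOn (fun i => x (i + 1)) (range (n + 1)) := fun a ha b hb h =>
        Nat.succ_injective (hx (by simpa using ha) (by simpa using hb) h)
      have herase : (range (n + 2)).erase 0 = (range (n + 1)).map (addRightEmbedding 1) := by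
        rw [range_add_one', erase_insert (by simp)]
        rfl
      calc dividedDifference (range (n + 2)) x (fun k => x k ^ (n + 1 + (r + 1)))
          = dividedDifference (range (n + 2)) x (fun k => x k ^ (n + 1 + r) * x k) := by
            simp only [← add_assoc, pow_succ]
        _ = x 0 * completeHomogeneous (n + 2) r x + dividedDifference (range (n + 1))
              (fun i => x (i + 1)) (fun k => x (k + 1) ^ (n + (r + 1))) := by
            rw [dividedDifference_mul_eq_add_erase hx (mem_range.2 (n + 1).succ_pos), ihr, herase,
              dividedDifference_map, Nat.add_right_comm n 1 r]
            rfl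
        _ = completeHomogeneous (n + 2) (r + 1) x := by
            rw [ih _ hx', completeHomogeneous_succ_succ (n + 1) r x]

end DividedDifference

section AbsoluteValues

variable {F : Type*} [Field F] [LinearOrder F] [IsStrictOrderedRing F]

theorem prod_erase_abs_sub {x : ℕ → F} {n i : ℕ} (hx : StrictMonoOn x (Set.Iic n)) (hi : i ≤ n) :
    ∏ l ∈ (range (n + 1)).erase i, |x l - x i| =
      (-1) ^ (n - i) * ∏ l ∈ (range (n + 1)).erase i, (x i - x l) := by
  have habs : ∀ l ∈ (range (n + 1)).erase i,
      |x l - x i| = (if i < l then -1 else 1) * (x i - x l) := by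
    intro l hl
    obtain ⟨hli, hl⟩ := mem_erase.1 hl
    have hl : l ≤ n := Nat.lt_succ_iff.1 (mem_range.1 hl)
    rcases lt_or_gt_of_ne hli with h | h
    · rw [if_neg h.not_gt, abs_of_neg (sub_neg.2 (hx hl hi h)), one_mul, neg_sub]
    · rw [if_pos h, abs_of_pos (sub_pos.2 (hx hi hl h)), neg_one_mul, neg_sub]
  have hcard : #{l ∈ (range (n + 1)).erase i | i < l} = n - i := by
    rw [← Nat.card_Ioc i n]
    congr 1
    ext l
    simp only [mem_filter, mem_erase, mem_range, mem_Ioc]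
    omega
  rw [prod_congr rfl habs, prod_mul_distrib, prod_ite, prod_const, prod_const_one, mul_one, hcard]

theorem neg_one_pow_mul_div_prod_abs_sub {x : ℕ → F} {n i : ℕ} (hx : StrictMonoOn x (Set.Iic n))
    (hi : i ≤ n) (a : F) :
    (-1) ^ i * a / ∏ l ∈ (range (n + 1)).erase i, |x l - x i| =
      (-1) ^ n * (a / ∏ l ∈ (range (n + 1)).erase i, (x i - x l)) := by
  obtain ⟨k, rfl⟩ := Nat.exists_eq_add_of_le hi
  rw [prod_erase_abs_sub hx hi, Nat.add_sub_cancel_left, div_mul_eq_div_div_swap, pow_add]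
  have hinv : ((-1 : F) ^ k)⁻¹ = (-1) ^ k := by rw [← inv_pow, inv_neg_one]
  rw [div_eq_mul_inv _ ((-1 : F) ^ k), hinv]
  ring

end AbsoluteValues

/-- For a degree sequence `0 = d_0 < d_1 < ⋯ < d_s` and `r ≥ 0`,
`Σ_{i=0}^s (-1)^i d_i^{s+r} / Π_{l ≠ i} |d_l - d_i| = (-1)^s h_r(d_1, …, d_s)`
in `ℚ`, where `h_r` is the complete homogeneous symmetric function of degree `r`. -/
theorem stmt7 (s : ℕ) (d : ℕ → ℤ) (hd : ∀ i < s, d i < d (i + 1)) (hd0 : d 0 = 0)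
    (r : ℕ) :
    ∑ i ∈ Finset.range (s + 1),
        (-1 : ℚ) ^ i * (d i : ℚ) ^ (s + r) /
          ∏ l ∈ (Finset.range (s + 1)).erase i, |(d l : ℚ) - (d i : ℚ)| =
    (-1 : ℚ) ^ s *
      ∑ α ∈ Finset.Nat.antidiagonalTuple s r, ∏ i : Fin s, (d ((i : ℕ) + 1) : ℚ) ^ α i := by
  have hmono : StrictMonoOn (fun i => (d i : ℚ)) (Set.Iic s) :=
    Int.cast_strictMono.comp_strictMonoOn (strictMonoOn_Iic_of_lt_succ hd)
  have hinj : Set.InjOn (fun i => (d i : ℚ)) (range (s + 1)) :=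
    hmono.injOn.mono fun i hi => Nat.lt_succ_iff.1 (mem_range.1 hi)
  calc _ = (-1) ^ s * dividedDifference (range (s + 1)) (fun i => (d i : ℚ))
          (fun i => (d i : ℚ) ^ (s + r)) := by
        rw [dividedDifference, mul_sum]
        exact sum_congr rfl fun i hi =>
          neg_one_pow_mul_div_prod_abs_sub hmono (mem_range_succ_iff.1 hi) _
    _ = (-1) ^ s * completeHomogeneous (s + 1) r (fun i => (d i : ℚ)) := by
        rw [dividedDifference_range_pow s _ hinj]
    _ = _ := by
        rw [completeHomogeneous_succ_of_eq_zero s r (by simp [hd0])]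
        rfl
end

section
/- Let s ≥ 1 be an integer and let a, b be integers with b ≥ s + 2, ⌈b/2⌉ ≤ a, and a ≤ b − 1. Then ( b − a − 1 )( a + 1 ) · ( s·⌊b/2⌋ − binom(s+1, 2) − 2 ) ≤ ( b − a ) · a · ( s·⌊b/2⌋ − binom(s+1, 2) ). -/
/-- The key arithmetic inequality: for an integer `s ≥ 1` and
integers `a, b` with `b ≥ s + 2`, `⌈b/2⌉ ≤ a` and `a ≤ b - 1`, one has
`(b - a - 1)(a + 1)(s·⌊b/2⌋ - C(s+1,2) - 2) ≤ (b - a)·a·(s·⌊b/2⌋ - C(s+1,2))`.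
(Since `b > 0`, `⌊b/2⌋ = b / 2` and `⌈b/2⌉ = (b + 1) / 2` in integer division.) -/
theorem stmt10 (s : ℕ) (hs : 1 ≤ s) (a b : ℤ)
    (hb : (s : ℤ) + 2 ≤ b) (ha1 : (b + 1) / 2 ≤ a) (ha2 : a ≤ b - 1) :
    (b - a - 1) * (a + 1) * ((s : ℤ) * (b / 2) - ((s + 1).choose 2 : ℤ) - 2) ≤
      (b - a) * a * ((s : ℤ) * (b / 2) - ((s + 1).choose 2 : ℤ)) := by
  have h2 : 2 * ((s + 1).choose 2) = (s + 1) * s := by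
    rw [Nat.choose_two_right, Nat.add_sub_cancel, Nat.mul_comm (s+1) s]
    obtain ⟨k, hk⟩ := Nat.even_mul_succ_self s
    omega
  have hch : (((s + 1).choose 2 : ℕ) : ℤ) * 2 = ((s : ℤ) + 1) * s := by
    have := congrArg (Nat.cast : ℕ → ℤ) h2
    push_cast at this
    linarith
  have h2a : b ≤ 2 * a := by omega
  have hq : ((s : ℤ) + 1) ≤ 2 * (b / 2) := by omega
  have hs' : (1 : ℤ) ≤ s := by exact_mod_cast hs
  have hT : 0 ≤ (s : ℤ) * (b / 2) - ((s + 1).choose 2 : ℤ) := by nlinarith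
  have hba : 0 ≤ b - a - 1 := by omega
  have ha0 : 0 ≤ a := by omega
  nlinarith [mul_nonneg hba (by linarith : (0:ℤ) ≤ a + 1)]
end

section
/- Let d = (0 = d_0 < d_1 < ... < d_s) be a degree sequence, k = ⌊s/2⌋, and let j be an index with k ≤ j ≤ s−1. Let d' be defined by d'_j = d_j + 1 and d'_i = d_i for i ≠ j, and suppose d' is strictly increasing and d' ≤ (d')^{∨, d_s}. If either (a) s = 2k and j = k, or (b) j ≥ k+1 and d_j + 1 ≤ ⌈d_s/2⌉, then Ψ_{d'} · f_1(d̃') = Ψ_d · f_1(d̃). -/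
/-- The sequence `d'` obtained from `d` by incrementing the `j`-th entry. -/
def upd (d : ℕ → ℤ) (j : ℕ) : ℕ → ℤ := Function.update d j (d j + 1)

/-! Raising `d_j` by one moves only two entries of `d̃`: the lower-half entry at `i = s - j`,
`min {d_s - d_j, ⌊d_s/2⌋}`, and the upper-half entry at `i = j`, `max {d_j, ⌈d_s/2⌉}`.
As long as `d_j + 1 ≤ ⌈d_s/2⌉` both clamps absorb the change, so `d̃' = d̃`. In case (a) this
bound comes from self-duality at the middle index: `d'_k ≤ d_s - d'_k`. -/

theorem tilde_upd_eq {s j : ℕ} {d : ℕ → ℤ} (hjs : j < s) (hc : d j + 1 ≤ (d s + 1) / 2) :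
    tilde s (upd d j) = tilde s d := by
  funext i
  have hds : upd d j s = d s := Function.update_of_ne hjs.ne' _ _
  unfold tilde
  rw [hds]
  split_ifs
  · by_cases hi : s - i = j
    · rw [hi, upd, Function.update_self]
      omega
    · rw [upd, Function.update_of_ne hi]
  · by_cases hi : i = j
    · rw [hi, upd, Function.update_self]
      omega
    · rw [upd, Function.update_of_ne hi]

theorem add_one_le_ceil_half_of_upd_le_dual {s j : ℕ} {d : ℕ → ℤ}
    (hsj : s - j = j) (hdual : upd d j j ≤ d s - upd d j (s - j)) :
    d j + 1 ≤ (d s + 1) / 2 := by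
  rw [hsj, upd, Function.update_self] at hdual
  omega

theorem stmt11_general (s : ℕ) (d : ℕ → ℤ)
    (j : ℕ) (hjs : j + 1 ≤ s)
    (hdual' : ∀ i ≤ s, upd d j i ≤ d s - upd d j (s - i))
    (hcase : (s = 2 * (s / 2) ∧ j = s / 2) ∨
      (s / 2 + 1 ≤ j ∧ d j + 1 ≤ (d s + 1) / 2)) :
    Psi s (upd d j) * f1 s (tilde s (upd d j)) = Psi s d * f1 s (tilde s d) := by
  have hc : d j + 1 ≤ (d s + 1) / 2 := by
    rcases hcase with ⟨hs_even, rfl⟩ | ⟨-, hc⟩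
    · exact add_one_le_ceil_half_of_upd_le_dual (by omega) (hdual' _ (by omega))
    · exact hc
  simp only [Psi, tilde_upd_eq hjs hc]

/-- Let `0 = d_0 < d_1 < ⋯ < d_s` be a degree sequence,
`k = ⌊s/2⌋`, and `k ≤ j ≤ s - 1`.  Let `d'` be obtained from `d` by replacing
`d_j` by `d_j + 1`, and suppose `d'` is strictly increasing with
`d' ≤ (d')^{∨,d_s}`.  If either (a) `s = 2k` and `j = k`, or (b) `j ≥ k + 1`
and `d_j + 1 ≤ ⌈d_s/2⌉`, then `Ψ_{d'}·f₁(d̃') = Ψ_d·f₁(d̃)`.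
(Note `d'_s = d_s` since `j < s`; `(d s + 1)/2 = ⌈d_s/2⌉` as `d_s ≥ 0`.) -/
theorem stmt11 (s : ℕ) (hs : 1 ≤ s) (d : ℕ → ℤ)
    (hd : ∀ i < s, d i < d (i + 1)) (hd0 : d 0 = 0)
    (j : ℕ) (hjk : s / 2 ≤ j) (hjs : j + 1 ≤ s)
    (hd' : ∀ i < s, upd d j i < upd d j (i + 1))
    (hdual' : ∀ i ≤ s, upd d j i ≤ d s - upd d j (s - i))
    (hcase : (s = 2 * (s / 2) ∧ j = s / 2) ∨
      (s / 2 + 1 ≤ j ∧ d j + 1 ≤ (d s + 1) / 2)) :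
    Psi s (upd d j) * f1 s (tilde s (upd d j)) = Psi s d * f1 s (tilde s d) :=
  stmt11_general s d j hjs hdual' hcase
end
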